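/- arXiv:1611.01619 — 7 statements merged into one kernel-verified Lean document; each statement's English description precedes it below -/
import Mathlib

section
/- For all real numbers x, y and every real p ≥ 2, the inequality |x+y|^p ≤ 2^p p^2 |x|^p + |y|^p + p·x·|y|^{p-1}·sgn(y) + 2^p p^2 x^2 |y|^{p-2} holds (with the convention that the last two terms are interpreted as 0 when y = 0). -/
/-!
Dividing by `|y|^p` reduces the inequality to one variable, `t = x / y`:
`|1 + t|^p ≤ 2^p p² |t|^p + 1 + p t + 2^p p² t²`.
For `|t| ≥ 1/2` the right-hand side dominates crudely, through `|1 + t| ≤ 2 max 1 |t|`.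
For `|t| < 1/2` one compares `(1 + t)^p ≤ exp (p t)` with the second-order bound
`exp u ≤ 1 + u + u² exp |u|`, where `exp |p t| ≤ exp (p / 2) ≤ 2^p`.
-/

open Real

lemma four_le_two_rpow {p : ℝ} (hp : 2 ≤ p) : (4 : ℝ) ≤ 2 ^ p := by
  calc (4 : ℝ) = 2 ^ (2 : ℝ) := by rw [rpow_two]; norm_num
    _ ≤ 2 ^ p := rpow_le_rpow_of_exponent_le one_le_two hp

lemma exp_half_mul_le_two_rpow {p : ℝ} (hp : 0 ≤ p) : exp (p / 2) ≤ 2 ^ p := by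
  rw [rpow_def_of_pos two_pos, exp_le_exp]
  nlinarith [log_two_gt_d9]

lemma exp_mul_one_sub_le_one (u : ℝ) : exp u * (1 - u) ≤ 1 := by
  calc exp u * (1 - u) ≤ exp u * exp (-u) := by
        gcongr; linarith [add_one_le_exp (-u)]
    _ = 1 := by rw [← exp_add, add_neg_cancel, exp_zero]

lemma exp_le_one_add_add_sq_mul_exp_abs (u : ℝ) : exp u ≤ 1 + u + u ^ 2 * exp |u| := by
  have h := exp_mul_one_sub_le_one u
  rcases le_total 0 u with hu | hu
  · rw [abs_of_nonneg hu]
    nlinarith [mul_le_mul_of_nonneg_right h (by linarith : 0 ≤ 1 + u)]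
  · have hsq : u ^ 2 ≤ u ^ 2 * exp |u| :=
      le_mul_of_one_le_right (sq_nonneg u) (one_le_exp (abs_nonneg u))
    nlinarith [add_one_le_exp u]

lemma one_add_rpow_le_exp_mul {t p : ℝ} (ht : -1 < t) (hp : 0 ≤ p) :
    (1 + t) ^ p ≤ exp (p * t) := by
  have h : 0 < 1 + t := by linarith
  rw [rpow_def_of_pos h, exp_le_exp, mul_comm p]
  exact mul_le_mul_of_nonneg_right (by linarith [log_le_sub_one_of_pos h]) hp

lemma abs_one_add_rpow_le_of_abs_lt_half {t p : ℝ} (ht : |t| < 1 / 2) (hp : 0 ≤ p) :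
    |1 + t| ^ p ≤ 1 + p * t + 2 ^ p * p ^ 2 * t ^ 2 := by
  obtain ⟨ht₁, ht₂⟩ := abs_lt.mp ht
  have hexp : exp |p * t| ≤ 2 ^ p := by
    refine le_trans (exp_le_exp.2 ?_) (exp_half_mul_le_two_rpow hp)
    rw [abs_mul, abs_of_nonneg hp]
    nlinarith [abs_nonneg t]
  calc |1 + t| ^ p = (1 + t) ^ p := by rw [abs_of_pos (by linarith)]
    _ ≤ exp (p * t) := one_add_rpow_le_exp_mul (by linarith) hp
    _ ≤ 1 + p * t + (p * t) ^ 2 * exp |p * t| := exp_le_one_add_add_sq_mul_exp_abs _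
    _ ≤ 1 + p * t + (p * t) ^ 2 * 2 ^ p := by gcongr
    _ = 1 + p * t + 2 ^ p * p ^ 2 * t ^ 2 := by ring

lemma abs_one_add_rpow_le_of_one_le_abs {t p : ℝ} (ht : 1 ≤ |t|) (hp : 2 ≤ p) :
    |1 + t| ^ p ≤ 2 ^ p * p ^ 2 * |t| ^ p + 1 + p * t + 2 ^ p * p ^ 2 * t ^ 2 := by
  have h4 := four_le_two_rpow hp
  have hbase : |1 + t| ^ p ≤ 2 ^ p * |t| ^ p := by
    rw [← mul_rpow zero_le_two (abs_nonneg t)]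
    gcongr
    linarith [abs_add_le 1 t, abs_one (α := ℝ)]
  have hlin : p * |t| ≤ p * |t| ^ p := by
    gcongr
    simpa using rpow_le_rpow_of_exponent_le ht (by linarith : (1 : ℝ) ≤ p)
  have hcoef : 2 ^ p + p ≤ 2 ^ p * p ^ 2 := by
    nlinarith [mul_nonneg (sub_nonneg.2 h4) (show (0 : ℝ) ≤ p ^ 2 - 1 by nlinarith)]
  nlinarith [mul_le_mul_of_nonneg_right hcoef (rpow_nonneg (abs_nonneg t) p), neg_abs_le t,
    mul_nonneg (mul_nonneg (show (0 : ℝ) ≤ 2 ^ p by linarith) (sq_nonneg p)) (sq_nonneg t)]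

lemma abs_one_add_rpow_le_of_half_le_abs {t p : ℝ} (ht₁ : 1 / 2 ≤ |t|) (ht₂ : |t| < 1)
    (hp : 2 ≤ p) :
    |1 + t| ^ p ≤ 2 ^ p * p ^ 2 * |t| ^ p + 1 + p * t + 2 ^ p * p ^ 2 * t ^ 2 := by
  have h4 := four_le_two_rpow hp
  have hbase : |1 + t| ^ p ≤ 2 ^ p := by
    gcongr
    linarith [abs_add_le 1 t, abs_one (α := ℝ)]
  have hsq : 1 / 4 ≤ t ^ 2 := by nlinarith [sq_abs t]
  have hlin : p * |t| ≤ p * (2 * t ^ 2) := by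
    gcongr
    nlinarith [sq_abs t]
  nlinarith [rpow_nonneg (abs_nonneg t) p, neg_abs_le t,
    mul_nonneg (sub_nonneg.2 h4) (show (0 : ℝ) ≤ p ^ 2 - 4 by nlinarith),
    mul_nonneg (show (0 : ℝ) ≤ 2 ^ p * p ^ 2 - 2 * p by nlinarith) (sub_nonneg.2 hsq)]

lemma abs_one_add_rpow_le (t : ℝ) {p : ℝ} (hp : 2 ≤ p) :
    |1 + t| ^ p ≤ 2 ^ p * p ^ 2 * |t| ^ p + 1 + p * t + 2 ^ p * p ^ 2 * t ^ 2 := by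
  rcases lt_or_ge |t| (1 / 2) with hsmall | hhalf
  · have hterm : 0 ≤ 2 ^ p * p ^ 2 * |t| ^ p := by positivity
    linarith [abs_one_add_rpow_le_of_abs_lt_half hsmall (show (0 : ℝ) ≤ p by linarith)]
  rcases lt_or_ge |t| 1 with hmid | hlarge
  · exact abs_one_add_rpow_le_of_half_le_abs hhalf hmid hp
  · exact abs_one_add_rpow_le_of_one_le_abs hlarge hp

lemma mul_sign_self (y : ℝ) : y * Real.sign y = |y| := by
  rcases lt_trichotomy y 0 with hy | rfl | hy
  · rw [sign_of_neg hy, abs_of_neg hy, mul_neg_one]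
  · simp
  · rw [sign_of_pos hy, abs_of_pos hy, mul_one]

lemma abs_add_rpow_le_of_ne_zero (x : ℝ) {y : ℝ} (hy : y ≠ 0) {p : ℝ} (hp : 2 ≤ p) :
    |x + y| ^ p ≤ 2 ^ p * p ^ 2 * |x| ^ p + |y| ^ p +
      (p * x * |y| ^ (p - 1) * Real.sign y + 2 ^ p * p ^ 2 * x ^ 2 * |y| ^ (p - 2)) := by
  have hy' : 0 < |y| := abs_pos.2 hy
  set t := x / y
  have hx : x = t * y := (div_mul_cancel₀ x hy).symm
  have hsum : |x + y| ^ p = |1 + t| ^ p * |y| ^ p := by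
    rw [hx, show t * y + y = (1 + t) * y by ring, abs_mul, mul_rpow (abs_nonneg _) hy'.le]
  have habs : |x| ^ p = |t| ^ p * |y| ^ p := by
    rw [hx, abs_mul, mul_rpow (abs_nonneg _) hy'.le]
  have hlin : p * x * |y| ^ (p - 1) * Real.sign y = p * t * |y| ^ p := by
    rw [rpow_sub_one hy'.ne', hx]
    calc _ = p * t * |y| ^ p * (y * Real.sign y) / |y| := by ring
      _ = p * t * |y| ^ p := by rw [mul_sign_self, mul_div_assoc, div_self hy'.ne', mul_one]
  have hquad : x ^ 2 * |y| ^ (p - 2) = t ^ 2 * |y| ^ p := by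
    rw [rpow_sub hy', rpow_two, sq_abs, hx]
    field_simp
  rw [hsum, habs, hlin, mul_assoc _ (x ^ 2), hquad]
  nlinarith [mul_le_mul_of_nonneg_right (abs_one_add_rpow_le t hp) (rpow_nonneg hy'.le p)]

theorem stmt_0 (x y p : ℝ) (hp : 2 ≤ p) :
    |x + y| ^ p ≤
      2 ^ p * p ^ 2 * |x| ^ p + |y| ^ p +
        (if y = 0 then 0 else
          p * x * |y| ^ (p - 1) * Real.sign y + 2 ^ p * p ^ 2 * x ^ 2 * |y| ^ (p - 2)) := by
  by_cases hy : y = 0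
  · subst hy
    have hcoef : 1 ≤ 2 ^ p * p ^ 2 := by nlinarith [four_le_two_rpow hp]
    rw [if_pos rfl, add_zero, add_zero, abs_zero, zero_rpow (by linarith), add_zero]
    exact le_mul_of_one_le_left (rpow_nonneg (abs_nonneg x) p) hcoef
  · rw [if_neg hy]
    exact abs_add_rpow_le_of_ne_zero x hy hp
end

section
/- For every real t ≥ 0, ln(1+t) ≥ t/(1+t) + (t^2/(2(1+t)^2))·(1 + (2/3)·ln(1+t)). -/
/-!
Both sides are compared through the series `log (1 + t) = 2 ∑ₖ u^(2k+1) / (2k+1)` with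
`u = t / (t + 2)`, whose terms are nonnegative for `t ≥ 0`. Its first two terms already dominate
the rational function `3t(3t+2) / (2(2t² + 6t + 3))` (the difference of the cleared numerators is
`5t⁴ + 12t³`), and the claimed inequality is that rational lower bound for `log (1 + t)` after
solving for the logarithm, whose coefficient `1 - t² / (3(1+t)²)` is positive.
-/

open Real

lemma two_terms_le_log_one_add {t : ℝ} (ht : 0 ≤ t) :
    2 * (t / (t + 2)) + 2 / 3 * (t / (t + 2)) ^ 3 ≤ log (1 + t) := by
  have h := sum_le_hasSum (Finset.range 2) (fun k _ => by positivity) (hasSum_log_one_add ht)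
  norm_num [Finset.sum_range_succ] at h
  linarith

lemma rational_le_log_one_add {t : ℝ} (ht : 0 ≤ t) :
    3 * t * (3 * t + 2) / (2 * (2 * t ^ 2 + 6 * t + 3)) ≤ log (1 + t) := by
  refine le_trans ?_ (two_terms_le_log_one_add ht)
  rw [div_le_iff₀ (by positivity)]
  field_simp
  nlinarith [pow_nonneg ht 3, pow_nonneg ht 4]

theorem stmt_1 (t : ℝ) (ht : 0 ≤ t) :
    Real.log (1 + t) ≥
      t / (1 + t) + t ^ 2 / (2 * (1 + t) ^ 2) * (1 + 2 / 3 * Real.log (1 + t)) := by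
  have hL := rational_le_log_one_add ht
  rw [div_le_iff₀ (by positivity)] at hL
  rw [ge_iff_le, ← sub_nonneg]
  have hdiff : log (1 + t) - (t / (1 + t) + t ^ 2 / (2 * (1 + t) ^ 2) * (1 + 2 / 3 * log (1 + t)))
      = (2 * (2 * t ^ 2 + 6 * t + 3) * log (1 + t) - 3 * t * (3 * t + 2)) / (6 * (1 + t) ^ 2) := by
    field_simp
    ring
  rw [hdiff]
  exact div_nonneg (by linarith) (by positivity)
end

section
/- For all positive reals x, y, A: (A/(xy) + 1)·ln(1 + xy/A) ≥ 1 + (xy/(2(xy+A)))·(1 + (2/3)·ln(1 + xy/A)). -/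
/-!
With `t = x y / A` the inequality reads `1 + t / (2 (1 + t)) (1 + (2/3) log (1 + t)) ≤ (1/t + 1) log (1 + t)`,
i.e. `t + (3/2) t² ≤ (1 + 2t + (2/3) t²) log (1 + t)`. This follows from the `[2/2]` Padé lower bound
`log (1 + t) ≥ (3t² + 6t) / (t² + 6t + 6)` for `t ≥ 0`.
The Padé bound holds because the difference of its two sides vanishes at `0` and has derivative
`t⁴ / ((1 + t) (t² + 6t + 6)²) ≥ 0`.
-/

open Set

namespace Real

lemma pade_denom_pos {u : ℝ} (hu : -1 < u) : 0 < u ^ 2 + 6 * u + 6 := by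
  nlinarith [sq_nonneg (u + 1)]

lemma hasDerivAt_log_one_add_sub_pade {u : ℝ} (hu : -1 < u) :
    HasDerivAt (fun v => log (1 + v) - (3 * v ^ 2 + 6 * v) / (v ^ 2 + 6 * v + 6))
      (u ^ 4 / ((1 + u) * (u ^ 2 + 6 * u + 6) ^ 2)) u := by
  have h1u : 0 < 1 + u := by linarith
  have hden := pade_denom_pos hu
  have hlog : HasDerivAt (fun v => log (1 + v)) (1 / (1 + u)) u := by
    simpa using ((hasDerivAt_id u).const_add 1).log h1u.ne'
  have hnum : HasDerivAt (fun v => 3 * v ^ 2 + 6 * v) (6 * u + 6) u :=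
    (((hasDerivAt_pow 2 u).const_mul 3).add ((hasDerivAt_id' u).const_mul 6)).congr_deriv (by ring)
  have hdenom : HasDerivAt (fun v => v ^ 2 + 6 * v + 6) (2 * u + 6) u :=
    (((hasDerivAt_pow 2 u).add ((hasDerivAt_id' u).const_mul 6)).add_const 6).congr_deriv (by ring)
  refine (hlog.sub (hnum.div hdenom hden.ne')).congr_deriv ?_
  rw [div_sub_div _ _ h1u.ne' (by positivity), div_eq_div_iff (by positivity) (by positivity)]
  ring

lemma pade_le_log_one_add {t : ℝ} (ht : 0 ≤ t) :
    (3 * t ^ 2 + 6 * t) / (t ^ 2 + 6 * t + 6) ≤ log (1 + t) := by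
  let f := fun v : ℝ => log (1 + v) - (3 * v ^ 2 + 6 * v) / (v ^ 2 + 6 * v + 6)
  have hderiv : ∀ v ∈ Ici (0 : ℝ), HasDerivAt f (v ^ 4 / ((1 + v) * (v ^ 2 + 6 * v + 6) ^ 2)) v :=
    fun v hv => hasDerivAt_log_one_add_sub_pade (by linarith [mem_Ici.mp hv])
  have hmono : MonotoneOn f (Ici 0) := by
    refine monotoneOn_of_deriv_nonneg (convex_Ici 0)
      (fun v hv => (hderiv v hv).continuousAt.continuousWithinAt)
      (fun v hv => (hderiv v (interior_subset hv)).differentiableAt.differentiableWithinAt)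
      fun v hv => ?_
    have hv0 : 0 ≤ v := interior_subset (s := Ici (0 : ℝ)) hv
    rw [(hderiv v hv0).deriv]
    have := pade_denom_pos (u := v) (by linarith)
    positivity
  have := hmono self_mem_Ici ht ht
  simpa [f] using this

lemma add_le_log_one_add_mul {t : ℝ} (ht : 0 ≤ t) :
    t + 3 / 2 * t ^ 2 ≤ log (1 + t) * (1 + 2 * t + 2 / 3 * t ^ 2) := by
  have hden := pade_denom_pos (u := t) (by linarith)
  have hpade := (div_le_iff₀ hden).mp (pade_le_log_one_add ht)
  have hquad : 0 ≤ 1 + 2 * t + 2 / 3 * t ^ 2 := by positivity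
  -- `(3t² + 6t)(1 + 2t + (2/3)t²) = (t + (3/2)t²)(t² + 6t + 6) + t⁴/2`
  nlinarith [mul_le_mul_of_nonneg_left hpade hquad, pow_nonneg ht 4]

lemma one_add_mul_le_inv_add_one_mul_log {t : ℝ} (ht : 0 < t) :
    1 + t / (2 * (1 + t)) * (1 + 2 / 3 * log (1 + t)) ≤ (1 / t + 1) * log (1 + t) := by
  have key := add_le_log_one_add_mul ht.le
  rw [← sub_nonneg]
  have expand : (1 / t + 1) * log (1 + t) - (1 + t / (2 * (1 + t)) * (1 + 2 / 3 * log (1 + t)))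
      = (log (1 + t) * (1 + 2 * t + 2 / 3 * t ^ 2) - (t + 3 / 2 * t ^ 2)) / (t * (1 + t)) := by
    field_simp
    ring
  rw [expand]
  exact div_nonneg (by linarith) (by positivity)

end Real

theorem stmt_2 (x y A : ℝ) (hx : 0 < x) (hy : 0 < y) (hA : 0 < A) :
    (A / (x * y) + 1) * Real.log (1 + x * y / A) ≥
      1 + x * y / (2 * (x * y + A)) * (1 + 2 / 3 * Real.log (1 + x * y / A)) := by
  have ht : 0 < x * y / A := by positivity
  have hratio : x * y / (2 * (x * y + A)) = x * y / A / (2 * (1 + x * y / A)) := by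
    field_simp
    ring
  rw [ge_iff_le, hratio, ← one_div_div (x * y) A]
  exact Real.one_add_mul_le_inv_add_one_mul_log ht
end

section
/- For every real y > 0 and every real u with u ≤ y, e^{tu} ≤ 1 + t·u + ((e^{ty} - 1 - t·y)/y^2)·u^2 for all t > 0. -/
/-!
Taylor's formula with integral remainder gives `exp x - 1 - x = x ^ 2 * φ x` with
`φ x = ∫₀¹ (1 - s) exp (x s) ds`, and `φ` is visibly nondecreasing. Hence for `a ≤ b`,
`exp a - 1 - a = a ^ 2 φ a ≤ a ^ 2 φ b`, and `φ b = (exp b - 1 - b) / b ^ 2` when `b ≠ 0`.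
Take `a = t u` and `b = t y`.
-/

open Real intervalIntegral

noncomputable section

/-- The continuous extension of `(exp x - 1 - x) / x ^ 2` (value `1 / 2` at `0`). -/
def expQuadCoeff (x : ℝ) : ℝ := ∫ s in (0 : ℝ)..1, (1 - s) * exp (x * s)

lemma exp_sub_one_sub_eq_sq_mul_expQuadCoeff (x : ℝ) :
    exp x - 1 - x = x ^ 2 * expQuadCoeff x := by
  rcases eq_or_ne x 0 with rfl | hx
  · simp
  have hderiv : ∀ s ∈ Set.uIcc (0 : ℝ) 1,
      HasDerivAt (fun s => (1 - s) * exp (x * s) / x + exp (x * s) / x ^ 2)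
        ((1 - s) * exp (x * s)) s := by
    intro s _
    have hexp : HasDerivAt (fun s => exp (x * s)) (exp (x * s) * x) s :=
      ((hasDerivAt_id s).const_mul x).exp.congr_deriv (by simp [mul_comm])
    have hlin : HasDerivAt (fun s : ℝ => 1 - s) (-1) s := (hasDerivAt_id s).const_sub 1
    refine (((hlin.mul hexp).div_const x).add (hexp.div_const (x ^ 2))).congr_deriv ?_
    field_simp
    ring
  have hint : IntervalIntegrable (fun s => (1 - s) * exp (x * s)) MeasureTheory.volume 0 1 :=
    (by fun_prop : Continuous fun s => (1 - s) * exp (x * s)).intervalIntegrable 0 1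
  rw [expQuadCoeff, integral_eq_sub_of_hasDerivAt hderiv hint]
  field_simp
  simp only [mul_zero, exp_zero]
  ring

lemma expQuadCoeff_eq_div {x : ℝ} (hx : x ≠ 0) :
    expQuadCoeff x = (exp x - 1 - x) / x ^ 2 := by
  rw [exp_sub_one_sub_eq_sq_mul_expQuadCoeff, mul_div_cancel_left₀ _ (pow_ne_zero 2 hx)]

lemma monotone_expQuadCoeff : Monotone expQuadCoeff := by
  intro a b hab
  refine integral_mono_on zero_le_one ?_ ?_ fun s hs => ?_
  · exact (by fun_prop : Continuous fun s => (1 - s) * exp (a * s)).intervalIntegrable 0 1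
  · exact (by fun_prop : Continuous fun s => (1 - s) * exp (b * s)).intervalIntegrable 0 1
  · have hexp : exp (a * s) ≤ exp (b * s) :=
      exp_le_exp.mpr (mul_le_mul_of_nonneg_right hab hs.1)
    exact mul_le_mul_of_nonneg_left hexp (by linarith [hs.2])

lemma exp_le_one_add_add_expQuadCoeff_mul_sq {a b : ℝ} (hab : a ≤ b) :
    exp a ≤ 1 + a + expQuadCoeff b * a ^ 2 := by
  have hmono := mul_le_mul_of_nonneg_left (monotone_expQuadCoeff hab) (sq_nonneg a)
  linarith [exp_sub_one_sub_eq_sq_mul_expQuadCoeff a]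

end

theorem stmt_3 (y u t : ℝ) (hy : 0 < y) (hu : u ≤ y) (ht : 0 < t) :
    Real.exp (t * u) ≤ 1 + t * u + (Real.exp (t * y) - 1 - t * y) / y ^ 2 * u ^ 2 := by
  have hle : t * u ≤ t * y := mul_le_mul_of_nonneg_left hu ht.le
  have hcoeff : expQuadCoeff (t * y) * (t * u) ^ 2 =
      (Real.exp (t * y) - 1 - t * y) / y ^ 2 * u ^ 2 := by
    rw [expQuadCoeff_eq_div (mul_pos ht hy).ne']
    field_simp
  simpa [hcoeff] using exp_le_one_add_add_expQuadCoeff_mul_sq hle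
end

section
/- Let (M_k, F_k)_{k=0..n} be a square-integrable martingale on a probability space with M_0 = 0 and differences d_k = M_k - M_{k-1}. Then E[(max_{0≤k≤n} (M_n - M_k))^2] ≤ E[Σ_{k=1}^n E[d_k^2 | F_{k-1}]]. -/
/-!
Write `G n = max_{k ≤ n} (M n - M k)`. Splitting off the term `k = n + 1` gives the recursion
`G (n + 1) = max (G n + d (n + 1)) 0`, so `G (n + 1) ^ 2 ≤ (G n + d (n + 1)) ^ 2`. Since `G n` is
`ℱ n`-measurable and `E[d (n + 1) | ℱ n] = 0`, the cross term vanishes and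
`E[G (n + 1) ^ 2] ≤ E[G n ^ 2] + E[d (n + 1) ^ 2]`; summing, and replacing each `E[d k ^ 2]` by
`E[E[d k ^ 2 | ℱ (k - 1)]]`, gives the bound.
-/

open MeasureTheory Finset

noncomputable def tailMax (a : ℕ → ℝ) (n : ℕ) : ℝ :=
  (range (n + 1)).sup' nonempty_range_add_one fun k => a n - a k

@[simp]
lemma tailMax_zero (a : ℕ → ℝ) : tailMax a 0 = 0 := by
  simp [tailMax]

lemma tailMax_succ (a : ℕ → ℝ) (n : ℕ) :
    tailMax a (n + 1) = max (tailMax a n + (a (n + 1) - a n)) 0 := by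
  simp only [tailMax, sup'_add, sub_add_sub_cancel']
  rw [sup'_congr _ range_add_one (fun _ _ => rfl), sup'_insert, sub_self, max_comm]

lemma sq_tailMax_succ_le (a : ℕ → ℝ) (n : ℕ) :
    tailMax a (n + 1) ^ 2 ≤ (tailMax a n + (a (n + 1) - a n)) ^ 2 := by
  rw [tailMax_succ]
  rcases le_total (tailMax a n + (a (n + 1) - a n)) 0 with h | h
  · rw [max_eq_right h]
    simpa using sq_nonneg _
  · rw [max_eq_left h]

namespace MeasureTheory

variable {Ω : Type*} {m₀ : MeasurableSpace Ω} {μ : Measure Ω} {M : ℕ → Ω → ℝ}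

lemma StronglyAdapted.tailMax {ℱ : Filtration ℕ m₀} (hM : StronglyAdapted ℱ M) :
    StronglyAdapted ℱ fun n ω => tailMax (M · ω) n :=
  fun n => (@Finset.measurable_range_sup'' _ _ _ (ℱ n) _ _ _ _ fun k hk =>
    ((hM n).sub ((hM k).mono (ℱ.mono hk))).measurable).stronglyMeasurable

lemma memLp_tailMax {p : ENNReal} (hM : ∀ k, MemLp (M k) p μ) (n : ℕ) :
    MemLp (fun ω => tailMax (M · ω) n) p μ := by
  induction n with
  | zero => simp
  | succ n ih =>
    simp only [tailMax_succ]
    exact (ih.add ((hM (n + 1)).sub (hM n))).pos_part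

lemma integral_mul_eq_zero_of_condExp_ae_eq_zero {m : MeasurableSpace Ω}
    (hm : m ≤ m₀) [SigmaFinite (μ.trim hm)] {g d : Ω → ℝ} (hg : StronglyMeasurable[m] g)
    (hgd : Integrable (g * d) μ) (hd : Integrable d μ) (hd0 : μ[d | m] =ᵐ[μ] 0) :
    ∫ ω, g ω * d ω ∂μ = 0 := calc
  ∫ ω, g ω * d ω ∂μ = ∫ ω, (μ[g * d | m]) ω ∂μ := (integral_condExp hm).symm
  _ = ∫ ω, (g * μ[d | m]) ω ∂μ :=
    integral_congr_ae (condExp_mul_of_stronglyMeasurable_left hg hgd hd)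
  _ = 0 := by
    rw [← integral_zero Ω ℝ]
    refine integral_congr_ae ?_
    filter_upwards [hd0] with ω hω
    simp [hω]

lemma integral_sq_add_eq_of_condExp_ae_eq_zero {m : MeasurableSpace Ω}
    [IsFiniteMeasure μ] (hm : m ≤ m₀) {g d : Ω → ℝ} (hg_meas : StronglyMeasurable[m] g)
    (hg : MemLp g 2 μ) (hd : MemLp d 2 μ) (hd0 : μ[d | m] =ᵐ[μ] 0) :
    ∫ ω, (g ω + d ω) ^ 2 ∂μ = ∫ ω, g ω ^ 2 ∂μ + ∫ ω, d ω ^ 2 ∂μ := by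
  have hgd : Integrable (fun ω => g ω * d ω) μ := hg.integrable_mul hd
  have hcross : ∫ ω, g ω * d ω ∂μ = 0 :=
    integral_mul_eq_zero_of_condExp_ae_eq_zero hm hg_meas hgd (hd.integrable one_le_two) hd0
  have h2gd : Integrable (fun ω => 2 * (g ω * d ω)) μ := hgd.const_mul 2
  have hg2 : Integrable (fun ω => g ω ^ 2 + 2 * (g ω * d ω)) μ := hg.integrable_sq.add h2gd
  calc ∫ ω, (g ω + d ω) ^ 2 ∂μ = ∫ ω, (g ω ^ 2 + 2 * (g ω * d ω)) + d ω ^ 2 ∂μ := by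
        congr 1; funext ω; ring
    _ = ∫ ω, g ω ^ 2 ∂μ + ∫ ω, d ω ^ 2 ∂μ := by
        rw [integral_add hg2 hd.integrable_sq, integral_add hg.integrable_sq h2gd,
          integral_const_mul, hcross, mul_zero, add_zero]

lemma Martingale.condExp_sub_ae_eq_zero {ι E : Type*} [Preorder ι] [NormedAddCommGroup E]
    [NormedSpace ℝ E] [CompleteSpace E] {ℱ : Filtration ι m₀} [SigmaFiniteFiltration μ ℱ]
    {f : ι → Ω → E} (hf : Martingale f ℱ μ) {i j : ι} (hij : i ≤ j) :
    μ[f j - f i | ℱ i] =ᵐ[μ] 0 := by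
  filter_upwards [condExp_sub (hf.integrable j) (hf.integrable i) (ℱ i), hf.condExp_ae_eq hij]
    with ω hsub hj
  rw [hsub, Pi.sub_apply, hj, condExp_of_stronglyMeasurable (ℱ.le i) (hf.stronglyAdapted i)
    (hf.integrable i), sub_self, Pi.zero_apply]

lemma Martingale.integral_sq_tailMax_le [IsFiniteMeasure μ] {ℱ : Filtration ℕ m₀}
    (hM : Martingale M ℱ μ) (hL2 : ∀ k, MemLp (M k) 2 μ) (n : ℕ) :
    ∫ ω, tailMax (M · ω) n ^ 2 ∂μ ≤ ∑ k ∈ Icc 1 n, ∫ ω, (M k ω - M (k - 1) ω) ^ 2 ∂μ := by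
  induction n with
  | zero => simp
  | succ n ih =>
    have hG : MemLp (fun ω => tailMax (M · ω) n) 2 μ := memLp_tailMax hL2 n
    have hd : MemLp (M (n + 1) - M n) 2 μ := (hL2 _).sub (hL2 n)
    calc ∫ ω, tailMax (M · ω) (n + 1) ^ 2 ∂μ
        ≤ ∫ ω, (tailMax (M · ω) n + (M (n + 1) - M n) ω) ^ 2 ∂μ :=
          integral_mono (memLp_tailMax hL2 _).integrable_sq (hG.add hd).integrable_sq
            fun ω => sq_tailMax_succ_le _ n
      _ = ∫ ω, tailMax (M · ω) n ^ 2 ∂μ + ∫ ω, (M (n + 1) ω - M n ω) ^ 2 ∂μ :=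
          integral_sq_add_eq_of_condExp_ae_eq_zero (ℱ.le n) (hM.stronglyAdapted.tailMax n) hG hd
            (hM.condExp_sub_ae_eq_zero n.le_succ)
      _ ≤ ∑ k ∈ Icc 1 (n + 1), ∫ ω, (M k ω - M (k - 1) ω) ^ 2 ∂μ := by
          rw [sum_Icc_succ_top (by omega), Nat.add_sub_cancel]
          exact add_le_add_left ih _

end MeasureTheory

theorem stmt_6 {Ω : Type*} {m : MeasurableSpace Ω} {μ : Measure Ω} [IsProbabilityMeasure μ]
    (ℱ : Filtration ℕ m) (M : ℕ → Ω → ℝ) (n : ℕ)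
    (hM : Martingale M ℱ μ)
    (hsq : ∀ k, Integrable (fun ω => (M k ω) ^ 2) μ) :
    ∫ ω, ((Finset.range (n + 1)).sup' (by simp) fun k => M n ω - M k ω) ^ 2 ∂μ ≤
      ∫ ω, ∑ k ∈ Finset.Icc 1 n,
        (μ[fun ω' => (M k ω' - M (k - 1) ω') ^ 2 | ℱ (k - 1)]) ω ∂μ := by
  have hL2 : ∀ k, MemLp (M k) 2 μ := fun k =>
    (memLp_two_iff_integrable_sq (hM.integrable k).aestronglyMeasurable).2 (hsq k)
  rw [integral_finsetSum _ fun k _ => integrable_condExp]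
  calc _ ≤ ∑ k ∈ Icc 1 n, ∫ ω, (M k ω - M (k - 1) ω) ^ 2 ∂μ := hM.integral_sq_tailMax_le hL2 n
    _ = _ := sum_congr rfl fun k _ => (integral_condExp (ℱ.le _)).symm
end

section
/- Let (a_n)_{n≥0} be a real sequence with Σ_{n=0}^∞ |a_n| < ∞, and let a = Σ_{n=0}^∞ a_n. Extend a_n = 0 for n < 0, and define a_{n,i} = (Σ_{k=1}^n a_{i-k})/√n for i ≥ 1. Then (i) sup_{i≥1} |a_{n,i}| ≤ n^{-1/2}·Σ_{j=0}^∞ |a_j| → 0 as n → ∞, and (ii) Σ_{i=1}^∞ a_{n,i}^2 → a^2 as n → ∞. -/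
/-!
With `T m = a 0 + ⋯ + a (m - 1)`, the numerator of `a_{n,i}` telescopes to the window sum
`T i - T (i - n)`, which is at most `∑ |a j|` in absolute value; this gives (i).

For (ii), the windows ending at `i ≤ n` are the partial sums `T i`, and the Cesàro mean of
`T i ^ 2` tends to `a ^ 2`. A full window satisfies `(∑_w a j) ^ 2 ≤ (∑ |a j|) * ∑_w |a j|`, and
summing the right-hand side over all windows of length `n` gives `∑ |a j|` times a sum of `n` tails
`∑_{j ≥ k} |a j|`. These tails tend to zero, so after division by `n` this contribution vanishes,
again by Cesàro.
-/

open Filter Finset Topology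

/-- `i - n` truncates at `0`: this is `a (i - n) + ⋯ + a (i - 1)` with negative indices dropped,
i.e. `√n` times the `a_{n,i}` of the paper. -/
def movingSum (a : ℕ → ℝ) (n i : ℕ) : ℝ :=
  ∑ j ∈ Ico (i - n) i, a j

@[simp]
theorem movingSum_zero_right (a : ℕ → ℝ) (n : ℕ) : movingSum a n 0 = 0 := by
  simp [movingSum]

theorem movingSum_of_le (a : ℕ → ℝ) {n i : ℕ} (h : i ≤ n) :
    movingSum a n i = ∑ j ∈ range i, a j := by
  rw [movingSum, Nat.sub_eq_zero_of_le h, range_eq_Ico]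

theorem movingSum_add (a : ℕ → ℝ) (n m : ℕ) :
    movingSum a n (m + n) = ∑ j ∈ Ico m (m + n), a j := by
  rw [movingSum, Nat.add_sub_cancel]

theorem sum_Icc_extendByZero_eq_movingSum (a : ℕ → ℝ) (aZ : ℤ → ℝ)
    (haZ : ∀ m : ℤ, aZ m = if 0 ≤ m then a m.toNat else 0) (n i : ℕ) :
    ∑ k ∈ Icc 1 n, aZ ((i : ℤ) - (k : ℤ)) = movingSum a n i := by
  induction n with
  | zero => simp [movingSum]
  | succ n ih =>
    rw [sum_Icc_succ_top (by omega), ih, haZ, movingSum, movingSum]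
    by_cases hni : n + 1 ≤ i
    · rw [if_pos (by omega), sum_eq_sum_Ico_succ_bot (show i - (n + 1) < i by omega), add_comm,
        show i - (n + 1) + 1 = i - n by omega,
        show ((i : ℤ) - (n + 1 : ℕ)).toNat = i - (n + 1) by omega]
    · rw [if_neg (by omega), add_zero, show i - (n + 1) = i - n by omega]

section AbsSummable

variable {a : ℕ → ℝ}

theorem abs_sum_le_tsum_abs (hsum : Summable fun n => |a n|) (s : Finset ℕ) :
    |∑ j ∈ s, a j| ≤ ∑' j, |a j| :=
  (abs_sum_le_sum_abs _ _).trans (hsum.sum_le_tsum _ fun _ _ => abs_nonneg _)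

theorem sq_sum_le_tsum_abs_mul (hsum : Summable fun n => |a n|) (s : Finset ℕ) :
    (∑ j ∈ s, a j) ^ 2 ≤ (∑' j, |a j|) * ∑ j ∈ s, |a j| := by
  rw [sq, ← abs_mul_abs_self]
  exact mul_le_mul (abs_sum_le_tsum_abs hsum s) (abs_sum_le_sum_abs _ _) (abs_nonneg _)
    (tsum_nonneg fun _ => abs_nonneg _)

theorem sq_movingSum_add_le (hsum : Summable fun n => |a n|) (n m : ℕ) :
    movingSum a n (m + n) ^ 2 ≤ (∑' j, |a j|) * ∑ k ∈ range n, |a (m + k)| := by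
  rw [movingSum_add]
  convert sq_sum_le_tsum_abs_mul hsum (Ico m (m + n)) using 2
  rw [sum_Ico_eq_sum_range, Nat.add_sub_cancel_left]

theorem summable_sum_range_abs_add (hsum : Summable fun n => |a n|) (n : ℕ) :
    Summable fun m => ∑ k ∈ range n, |a (m + k)| :=
  summable_sum fun k _ => (summable_nat_add_iff k).2 hsum

theorem summable_sq_movingSum (hsum : Summable fun n => |a n|) (n : ℕ) :
    Summable fun i => movingSum a n i ^ 2 :=
  (summable_nat_add_iff (f := fun i => movingSum a n i ^ 2) n).1 <|
    ((summable_sum_range_abs_add hsum n).mul_left _).of_nonneg_of_le (fun _ => sq_nonneg _)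
      (sq_movingSum_add_le hsum n)

theorem tsum_sq_movingSum_add_le (hsum : Summable fun n => |a n|) (n : ℕ) :
    ∑' m, movingSum a n (m + n) ^ 2 ≤ (∑' j, |a j|) * ∑ k ∈ range n, ∑' m, |a (m + k)| := by
  have hmaj := (summable_sum_range_abs_add hsum n).mul_left (∑' j, |a j|)
  calc ∑' m, movingSum a n (m + n) ^ 2
      ≤ ∑' m, (∑' j, |a j|) * ∑ k ∈ range n, |a (m + k)| :=
        ((summable_nat_add_iff n).2 (summable_sq_movingSum hsum n)).tsum_le_tsum
          (sq_movingSum_add_le hsum n) hmaj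
    _ = (∑' j, |a j|) * ∑ k ∈ range n, ∑' m, |a (m + k)| := by
        rw [tsum_mul_left, Summable.tsum_finsetSum fun k _ => (summable_nat_add_iff k).2 hsum]

theorem tendsto_inv_mul_tsum_sq_movingSum (hsum : Summable fun n => |a n|) :
    Tendsto (fun n : ℕ => (n : ℝ)⁻¹ * ∑' i, movingSum a n i ^ 2) atTop (𝓝 ((∑' j, a j) ^ 2)) := by
  have hsplit (n : ℕ) : ∑' i, movingSum a n i ^ 2
      = ∑ i ∈ range n, (∑ j ∈ range i, a j) ^ 2 + ∑' m, movingSum a n (m + n) ^ 2 := by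
    rw [← (summable_sq_movingSum hsum n).sum_add_tsum_nat_add n]
    congr 1
    exact sum_congr rfl fun i hi => by rw [movingSum_of_le a (mem_range.1 hi).le]
  have hpartial : Tendsto (fun n : ℕ => (n : ℝ)⁻¹ * ∑ i ∈ range n, (∑ j ∈ range i, a j) ^ 2)
      atTop (𝓝 ((∑' j, a j) ^ 2)) :=
    (hsum.of_abs.hasSum.tendsto_sum_nat.pow 2).cesaro
  have hremainder : Tendsto (fun n : ℕ => (n : ℝ)⁻¹ * ∑' m, movingSum a n (m + n) ^ 2)
      atTop (𝓝 0) := by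
    have htails := (tendsto_sum_nat_add fun j => |a j|).cesaro.const_mul (∑' j, |a j|)
    rw [mul_zero] at htails
    refine squeeze_zero (fun n => by positivity) (fun n => ?_) htails
    rw [mul_left_comm]
    exact mul_le_mul_of_nonneg_left (tsum_sq_movingSum_add_le hsum n) (by positivity)
  simpa only [hsplit, mul_add, add_zero] using hpartial.add hremainder

end AbsSummable

theorem tendsto_iSup_abs_of_abs_le {ι : Type*} [Nonempty ι] {f : ℕ → ι → ℝ} {b : ℕ → ℝ}
    (hfb : ∀ n i, |f n i| ≤ b n) (hb : Tendsto b atTop (𝓝 0)) :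
    Tendsto (fun n => ⨆ i, |f n i|) atTop (𝓝 0) :=
  squeeze_zero (fun _ => Real.iSup_nonneg fun _ => abs_nonneg _) (fun n => ciSup_le (hfb n)) hb

theorem stmt_8 (a : ℕ → ℝ) (hsum : Summable fun n => |a n|)
    (aZ : ℤ → ℝ) (haZ : ∀ m : ℤ, aZ m = if 0 ≤ m then a m.toNat else 0)
    (A : ℕ → ℕ → ℝ)
    (hA : ∀ n i, A n i = (∑ k ∈ Finset.Icc 1 n, aZ ((i : ℤ) - (k : ℤ))) / Real.sqrt n) :
    (∀ n : ℕ, 1 ≤ n → ∀ i : ℕ, 1 ≤ i →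
        |A n i| ≤ (n : ℝ) ^ (-(1 / 2 : ℝ)) * ∑' j, |a j|) ∧
      Tendsto (fun n => ⨆ i : {i : ℕ // 1 ≤ i}, |A n i|) atTop (nhds 0) ∧
      Tendsto (fun n => ∑' i : ℕ, A n (i + 1) ^ 2) atTop (nhds ((∑' j, a j) ^ 2)) := by
  have hA' (n i : ℕ) : A n i = movingSum a n i / Real.sqrt n := by
    rw [hA, sum_Icc_extendByZero_eq_movingSum a aZ haZ]
  have hbound (n i : ℕ) : |A n i| ≤ (n : ℝ) ^ (-(1 / 2 : ℝ)) * ∑' j, |a j| := by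
    rw [hA', abs_div, abs_of_nonneg (Real.sqrt_nonneg _), Real.rpow_neg n.cast_nonneg,
      ← Real.sqrt_eq_rpow, inv_mul_eq_div]
    exact div_le_div_of_nonneg_right (abs_sum_le_tsum_abs hsum _) (Real.sqrt_nonneg _)
  have hshift (n : ℕ) : ∑' i, A n (i + 1) ^ 2 = (n : ℝ)⁻¹ * ∑' i, movingSum a n i ^ 2 := by
    simp_rw [hA', div_pow, Real.sq_sqrt n.cast_nonneg, ← tsum_mul_left, ← inv_mul_eq_div]
    refine (add_left_injective (1 : ℕ)).tsum_eq
      (f := fun i => (n : ℝ)⁻¹ * movingSum a n i ^ 2) fun j hj => ?_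
    cases j with
    | zero => simp at hj
    | succ j => exact ⟨j, rfl⟩
  refine ⟨fun n _ i _ => hbound n i, ?_, ?_⟩
  · have : Nonempty {i : ℕ // 1 ≤ i} := ⟨⟨1, le_rfl⟩⟩
    refine tendsto_iSup_abs_of_abs_le (fun n (i : {i : ℕ // 1 ≤ i}) => hbound n i) ?_
    simpa using ((tendsto_rpow_neg_atTop (by norm_num : (0 : ℝ) < 1 / 2)).comp
      tendsto_natCast_atTop_atTop).mul_const (∑' j, |a j|)
  · simpa only [hshift] using tendsto_inv_mul_tsum_sq_movingSum hsum
end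

section
/- Let (M_t)_{t∈[s,T]} be a continuous square-integrable martingale on a probability space with conditional variance bound E[(M_t - M_u)^2 | F_u] ≤ σ^2 (t - u) a.s. for all s ≤ u ≤ t ≤ T. Then for every x ≥ 0 and s ≤ t ≤ T, P(M_t - M_s ≥ x) ≤ exp(-x^2/(2σ^2(t-s))). -/
/-!
Cut `[s, t]` into `n` equal pieces. Truncating each increment `Δᵢ` of `M` at a level `ε > 0` and
recentring it conditionally on the past gives martingale differences `Dᵢ ≤ ε + σ²(t - s)/(nε)`
with conditional variance at most `σ²(t - s)/n`, and `Dᵢ ≥ Δᵢ` wherever `Δᵢ ≤ ε`. The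
Bennett-type inequality `exp y ≤ 1 + y + y² e^c / 2` (for `y ≤ c`, `0 ≤ c`) bounds the conditional
mean of `exp (l Dᵢ)`, so by the tower property and Chernoff's bound
`P(M_t - M_s ≥ x) ≤ exp (-l x + l² e^{l(ε + σ²(t - s)/(nε))} σ²(t - s)/2) + P(some Δᵢ > ε)`.
By continuity of the paths the last probability tends to `0` as `n → ∞`; then let `ε → 0` and
choose `l = x / (σ²(t - s))`.
-/

open MeasureTheory ProbabilityTheory Real Filter Set Finset Topology

section

variable {Ω : Type*} {m m₀ : MeasurableSpace Ω} {μ : Measure[m₀] Ω}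

lemma Real.exp_le_one_add_add_sq_mul_exp {y c : ℝ} (hc : 0 ≤ c) (hy : y ≤ c) :
    exp y ≤ 1 + y + y ^ 2 / 2 * exp c := by
  set F : ℝ → ℝ := fun z => 1 + z + z ^ 2 / 2 * exp c - exp z
  have hF (z : ℝ) : HasDerivAt F (1 + z * exp c - exp z) z := by
    refine ((((hasDerivAt_id' z).const_add 1).add
      (((hasDerivAt_pow 2 z).div_const 2).mul_const (exp c))).sub (hasDerivAt_exp z)).congr_deriv ?_
    simp
  have hFc : Continuous F := by fun_prop
  have hF0 : F 0 = 0 := by simp [F]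
  suffices 0 ≤ F y by simp only [F] at this; linarith
  -- `F` decreases on `(-∞, 0]` and increases on `[0, c]`
  rcases le_total y 0 with hy0 | hy0
  · have : AntitoneOn F (Iic 0) :=
      antitoneOn_of_hasDerivWithinAt_nonpos (convex_Iic 0) hFc.continuousOn
        (fun z _ => (hF z).hasDerivWithinAt) fun z hz => by
          rw [interior_Iic] at hz
          nlinarith [add_one_le_exp z, one_le_exp hc, mem_Iio.1 hz]
    simpa [hF0] using this hy0 self_mem_Iic hy0
  · have : MonotoneOn F (Icc 0 c) :=
      monotoneOn_of_hasDerivWithinAt_nonneg (convex_Icc 0 c) hFc.continuousOn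
        (fun z _ => (hF z).hasDerivWithinAt) fun z hz => by
          rw [interior_Icc] at hz
          have h1 : exp z * exp (-z) = 1 := by rw [← exp_add]; simp
          nlinarith [add_one_le_exp (-z), exp_le_exp.2 hz.2.le, exp_pos z, hz.1]
    simpa [hF0] using this (left_mem_Icc.2 hc) ⟨hy0, hy⟩ hy0

lemma integrable_exp_mul_of_ae_le [IsFiniteMeasure μ] {X : Ω → ℝ} {l c : ℝ} (hl : 0 ≤ l)
    (hX : AEStronglyMeasurable X μ) (hXc : ∀ᵐ ω ∂μ, X ω ≤ c) :
    Integrable (fun ω => exp (l * X ω)) μ := by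
  refine Integrable.mono' (integrable_const (exp (l * c)))
    (continuous_exp.comp_aestronglyMeasurable (hX.const_mul l)) ?_
  filter_upwards [hXc] with ω hω
  rw [norm_of_nonneg (exp_pos _).le]
  exact exp_le_exp.2 (mul_le_mul_of_nonneg_left hω hl)

lemma condExp_exp_mul_le [IsFiniteMeasure μ] (hm : m ≤ m₀) {X : Ω → ℝ} {l c v : ℝ}
    (hl : 0 ≤ l) (hc : 0 ≤ c) (hX : MemLp X 2 μ) (hXc : ∀ᵐ ω ∂μ, X ω ≤ c)
    (hX0 : μ[X|m] =ᵐ[μ] 0) (hX2 : μ[X ^ 2|m] ≤ᵐ[μ] fun _ => v) :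
    μ[fun ω => exp (l * X ω)|m] ≤ᵐ[μ] fun _ => 1 + l ^ 2 * exp (l * c) * v / 2 := by
  set κ := l ^ 2 * exp (l * c) / 2
  have hint : Integrable X μ := hX.integrable one_le_two
  have hint2 : Integrable (X ^ 2) μ := hX.integrable_sq
  have hle : (fun ω => exp (l * X ω)) ≤ᵐ[μ] (fun _ => (1 : ℝ)) + (l • X + κ • X ^ 2) := by
    filter_upwards [hXc] with ω hω
    have := exp_le_one_add_add_sq_mul_exp (mul_nonneg hl hc) (mul_le_mul_of_nonneg_left hω hl)
    simp only [Pi.add_apply, Pi.smul_apply, Pi.pow_apply, smul_eq_mul, κ]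
    linarith
  have hlin : μ[(fun _ => (1 : ℝ)) + (l • X + κ • X ^ 2)|m] =ᵐ[μ]
      (fun _ => (1 : ℝ)) + (l • μ[X|m] + κ • μ[X ^ 2|m]) := by
    filter_upwards [condExp_add (m := m) (integrable_const 1) ((hint.smul l).add (hint2.smul κ)),
      condExp_add (m := m) (hint.smul l) (hint2.smul κ), condExp_smul (m := m) l X,
      condExp_smul (m := m) κ (X ^ 2)] with ω h1 h2 h3 h4
    simp only [Pi.add_apply] at h1 h2 ⊢
    rw [h1, h2, h3, h4, condExp_const hm]
  filter_upwards [condExp_mono (m := m) (integrable_exp_mul_of_ae_le hl hX.1 hXc)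
    ((integrable_const 1).add ((hint.smul l).add (hint2.smul κ))) hle, hlin, hX0, hX2]
    with ω h1 h2 h3 h4
  simp only [h2, Pi.add_apply, Pi.smul_apply, smul_eq_mul, h3, Pi.zero_apply] at h1
  have : κ * μ[X ^ 2|m] ω ≤ κ * v := mul_le_mul_of_nonneg_left h4 (by positivity)
  simp only [κ] at this h1 ⊢
  linarith

lemma integral_prod_le_pow_of_condExp_le [IsProbabilityMeasure μ] (𝒢 : Filtration ℕ m₀)
    {Y : ℕ → Ω → ℝ} {K B : ℝ} (hB : 0 ≤ B) (hY : ∀ i, StronglyMeasurable[𝒢 (i + 1)] (Y i))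
    (hY0 : ∀ i ω, 0 ≤ Y i ω)
    (hYK : ∀ i, ∀ᵐ ω ∂μ, Y i ω ≤ K) (hYB : ∀ i, μ[Y i|𝒢 i] ≤ᵐ[μ] fun _ => B) (n : ℕ) :
    ∫ ω, ∏ i ∈ range n, Y i ω ∂μ ≤ B ^ n := by
  have hYint (i : ℕ) : Integrable (Y i) μ :=
    Integrable.of_bound ((hY i).mono (𝒢.le _)).aestronglyMeasurable K
      (by filter_upwards [hYK i] with ω hω using by rwa [norm_of_nonneg (hY0 i ω)])
  induction n with
  | zero => simp
  | succ n ih =>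
    set P : Ω → ℝ := fun ω => ∏ i ∈ range n, Y i ω
    have hP : StronglyMeasurable[𝒢 n] P :=
      Finset.stronglyMeasurable_fun_prod _ fun i hi =>
        (hY i).mono (𝒢.mono (Finset.mem_range.1 hi))
    have hPK : ∀ᵐ ω ∂μ, ‖P ω‖ ≤ K ^ n := by
      filter_upwards [ae_all_iff.2 hYK] with ω hω
      rw [norm_of_nonneg (prod_nonneg fun i _ => hY0 i ω)]
      exact (prod_le_prod (fun i _ => hY0 i ω) fun i _ => hω i).trans (by simp)
    have hpull := condExp_stronglyMeasurable_mul_of_bound (𝒢.le n) hP (hYint n) _ hPK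
    have hPint : Integrable P μ := Integrable.of_bound (hP.mono (𝒢.le n)).aestronglyMeasurable _ hPK
    calc ∫ ω, ∏ i ∈ range (n + 1), Y i ω ∂μ = ∫ ω, μ[P * Y n|𝒢 n] ω ∂μ := by
          simp_rw [integral_condExp (𝒢.le n), prod_range_succ]; rfl
      _ = ∫ ω, P ω * μ[Y n|𝒢 n] ω ∂μ := integral_congr_ae hpull
      _ ≤ ∫ ω, P ω * B ∂μ := by
          refine integral_mono_ae (integrable_condExp.congr hpull) (hPint.mul_const B) ?_
          filter_upwards [hYB n] with ω hω
          exact mul_le_mul_of_nonneg_left hω (prod_nonneg fun i _ => hY0 i ω)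
      _ ≤ B ^ n * B := by rw [integral_mul_const]; exact mul_le_mul_of_nonneg_right ih hB
      _ = B ^ (n + 1) := (pow_succ B n).symm

section CenteredTrunc

variable {X : Ω → ℝ} {ε v : ℝ}

noncomputable def centeredTrunc (m : MeasurableSpace Ω) (μ : Measure[m₀] Ω) (ε : ℝ)
    (X : Ω → ℝ) : Ω → ℝ :=
  {ω | X ω ≤ ε}.indicator X - μ[{ω | X ω ≤ ε}.indicator X|m]

lemma memLp_indicator_le (hXm : Measurable X) (hX : MemLp X 2 μ) :
    MemLp ({ω | X ω ≤ ε}.indicator X) 2 μ :=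
  hX.indicator (measurableSet_le hXm measurable_const)

/-- The part of `X` cut off by the truncation is nonnegative and at most `X² / ε`, so its
conditional mean lies in `[0, v / ε]`. -/
lemma condExp_indicator_le_mem_Icc [IsFiniteMeasure μ] (hε : 0 < ε) (hXm : Measurable X)
    (hX : MemLp X 2 μ) (hX0 : μ[X|m] =ᵐ[μ] 0) (hXv : μ[X ^ 2|m] ≤ᵐ[μ] fun _ => v) :
    ∀ᵐ ω ∂μ, μ[{ω | X ω ≤ ε}.indicator X|m] ω ∈ Icc (-(v / ε)) 0 := by
  set R := X - {ω | X ω ≤ ε}.indicator X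
  have hR : ∀ ω, 0 ≤ R ω ∧ R ω ≤ (ε⁻¹ • X ^ 2) ω := by
    intro ω
    by_cases h : X ω ≤ ε
    · simp [R, h, Set.indicator_of_mem, sq_nonneg, inv_nonneg.2 hε.le, mul_nonneg]
    · simp only [R, Pi.sub_apply, Set.indicator_of_notMem (s := {ω | X ω ≤ ε})
        (show ω ∉ {ω | X ω ≤ ε} from h), sub_zero]
      rw [not_le] at h
      refine ⟨by linarith, ?_⟩
      rw [Pi.smul_apply, Pi.pow_apply, smul_eq_mul, ← div_eq_inv_mul, le_div_iff₀ hε]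
      nlinarith
  have hTint := (memLp_indicator_le (ε := ε) hXm hX).integrable one_le_two
  have hXint := hX.integrable one_le_two
  have hRint : Integrable R μ := hXint.sub hTint
  filter_upwards [condExp_sub (m := m) hXint hTint, hX0, hXv,
    condExp_nonneg (m := m) (Eventually.of_forall fun ω => (hR ω).1),
    condExp_mono (m := m) (g := ε⁻¹ • X ^ 2) hRint (hX.integrable_sq.smul ε⁻¹)
      (Eventually.of_forall fun ω => (hR ω).2),
    condExp_smul (m := m) ε⁻¹ (X ^ 2)] with ω h1 h2 h3 h4 h5 h6
  simp only [Pi.sub_apply, Pi.zero_apply, R] at h1 h2 h4 h5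
  rw [h1, h2] at h4 h5
  rw [h6, Pi.smul_apply, smul_eq_mul] at h5
  have : ε⁻¹ * μ[X ^ 2|m] ω ≤ v / ε := by
    rw [div_eq_inv_mul]; exact mul_le_mul_of_nonneg_left h3 (inv_nonneg.2 hε.le)
  constructor <;> linarith

lemma centeredTrunc_le [IsFiniteMeasure μ] (hε : 0 < ε) (hXm : Measurable X) (hX : MemLp X 2 μ)
    (hX0 : μ[X|m] =ᵐ[μ] 0) (hXv : μ[X ^ 2|m] ≤ᵐ[μ] fun _ => v) :
    ∀ᵐ ω ∂μ, centeredTrunc m μ ε X ω ≤ ε + v / ε := by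
  filter_upwards [condExp_indicator_le_mem_Icc hε hXm hX hX0 hXv] with ω hω
  have : {ω | X ω ≤ ε}.indicator X ω ≤ ε := by
    by_cases h : X ω ≤ ε <;> simp [h, hε.le]
  simp only [centeredTrunc, Pi.sub_apply]
  linarith [hω.1]

lemma le_centeredTrunc [IsFiniteMeasure μ] (hε : 0 < ε) (hXm : Measurable X) (hX : MemLp X 2 μ)
    (hX0 : μ[X|m] =ᵐ[μ] 0) (hXv : μ[X ^ 2|m] ≤ᵐ[μ] fun _ => v) :
    ∀ᵐ ω ∂μ, X ω ≤ ε → X ω ≤ centeredTrunc m μ ε X ω := by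
  filter_upwards [condExp_indicator_le_mem_Icc hε hXm hX hX0 hXv] with ω hω h
  simp only [centeredTrunc, Pi.sub_apply, Set.indicator_of_mem (show ω ∈ {ω | X ω ≤ ε} from h)]
  linarith [hω.2]

lemma memLp_centeredTrunc (hXm : Measurable X) (hX : MemLp X 2 μ) :
    MemLp (centeredTrunc m μ ε X) 2 μ :=
  (memLp_indicator_le hXm hX).sub ((memLp_indicator_le hXm hX).condExp one_le_two)

lemma stronglyMeasurable_centeredTrunc {m' : MeasurableSpace Ω} (hmm' : m ≤ m')
    (hX : StronglyMeasurable[m'] X) : StronglyMeasurable[m'] (centeredTrunc m μ ε X) :=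
  (hX.indicator (measurableSet_le hX.measurable measurable_const)).sub
    (stronglyMeasurable_condExp.mono hmm')

lemma condExp_centeredTrunc [IsFiniteMeasure μ] (hm : m ≤ m₀) (hXm : Measurable X)
    (hX : MemLp X 2 μ) : μ[centeredTrunc m μ ε X|m] =ᵐ[μ] 0 := by
  have hT := (memLp_indicator_le (ε := ε) hXm hX).integrable one_le_two
  filter_upwards [condExp_sub (m := m) hT integrable_condExp] with ω hω
  rw [centeredTrunc, hω, Pi.sub_apply,
    condExp_of_stronglyMeasurable hm stronglyMeasurable_condExp integrable_condExp, sub_self,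
    Pi.zero_apply]

lemma condExp_centeredTrunc_sq_le [IsFiniteMeasure μ] (hm : m ≤ m₀) (hXm : Measurable X)
    (hX : MemLp X 2 μ) (hXv : μ[X ^ 2|m] ≤ᵐ[μ] fun _ => v) :
    μ[centeredTrunc m μ ε X ^ 2|m] ≤ᵐ[μ] fun _ => v := by
  have hT := memLp_indicator_le (ε := ε) hXm hX
  have hsq : {ω | X ω ≤ ε}.indicator X ^ 2 ≤ X ^ 2 := fun ω => by
    by_cases h : X ω ≤ ε <;> simp [h, sq_nonneg]
  filter_upwards [condVar_ae_le_condExp_sq hm hT,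
    condExp_mono (m := m) hT.integrable_sq hX.integrable_sq (Eventually.of_forall hsq), hXv]
    with ω h1 h2 h3
  exact h1.trans (h2.trans h3)

end CenteredTrunc

theorem measureReal_le_sum_le_exp_of_le [IsProbabilityMeasure μ] (𝒢 : Filtration ℕ m₀)
    {D : ℕ → Ω → ℝ} {c v l : ℝ} (hc : 0 ≤ c) (hv : 0 ≤ v) (hl : 0 ≤ l)
    (hD : ∀ i, StronglyMeasurable[𝒢 (i + 1)] (D i)) (hD2 : ∀ i, MemLp (D i) 2 μ)
    (hDc : ∀ i, ∀ᵐ ω ∂μ, D i ω ≤ c) (hD0 : ∀ i, μ[D i|𝒢 i] =ᵐ[μ] 0)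
    (hDv : ∀ i, μ[D i ^ 2|𝒢 i] ≤ᵐ[μ] fun _ => v) (x : ℝ) (n : ℕ) :
    μ.real {ω | x ≤ ∑ i ∈ range n, D i ω} ≤
      exp (-l * x + n * (l ^ 2 * exp (l * c) * v / 2)) := by
  set S : Ω → ℝ := fun ω => ∑ i ∈ range n, D i ω
  set b := l ^ 2 * exp (l * c) * v / 2
  have hmgf : mgf S μ l ≤ (1 + b) ^ n := by
    simp_rw [mgf, S, Finset.mul_sum, exp_sum]
    refine integral_prod_le_pow_of_condExp_le 𝒢 (by positivity)
      (fun i => continuous_exp.comp_stronglyMeasurable ((hD i).const_mul l))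
      (fun i ω => (exp_pos _).le) (K := exp (l * c)) (fun i => ?_)
      (fun i => condExp_exp_mul_le (𝒢.le i) hl hc (hD2 i) (hDc i) (hD0 i) (hDv i)) n
    filter_upwards [hDc i] with ω hω
    exact exp_le_exp.2 (mul_le_mul_of_nonneg_left hω hl)
  have hSc : ∀ᵐ ω ∂μ, S ω ≤ n * c := by
    filter_upwards [ae_all_iff.2 hDc] with ω hω
    simpa using Finset.sum_le_sum fun i (_ : i ∈ range n) => hω i
  have hS : AEStronglyMeasurable S μ :=
    (Finset.stronglyMeasurable_fun_sum _ fun i _ => (hD i).mono (𝒢.le _)).aestronglyMeasurable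
  have hpow : (1 + b) ^ n ≤ exp (n * b) := by
    rw [exp_nat_mul]
    exact pow_le_pow_left₀ (by positivity) (by linarith [add_one_le_exp b]) n
  calc μ.real {ω | x ≤ S ω} ≤ exp (-l * x) * mgf S μ l :=
        measure_ge_le_exp_mul_mgf x hl (integrable_exp_mul_of_ae_le hl hS hSc)
    _ ≤ exp (-l * x) * exp (n * b) := by gcongr; exact hmgf.trans hpow
    _ = _ := by rw [← exp_add]

theorem measureReal_le_sum_le_exp_add [IsProbabilityMeasure μ] (𝒢 : Filtration ℕ m₀)
    {X : ℕ → Ω → ℝ} {v ε l : ℝ} (hv : 0 ≤ v) (hε : 0 < ε) (hl : 0 ≤ l)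
    (hX : ∀ i, StronglyMeasurable[𝒢 (i + 1)] (X i)) (hX2 : ∀ i, MemLp (X i) 2 μ)
    (hX0 : ∀ i, μ[X i|𝒢 i] =ᵐ[μ] 0) (hXv : ∀ i, μ[X i ^ 2|𝒢 i] ≤ᵐ[μ] fun _ => v)
    (x : ℝ) (n : ℕ) :
    μ.real {ω | x ≤ ∑ i ∈ range n, X i ω} ≤
      exp (-l * x + n * (l ^ 2 * exp (l * (ε + v / ε)) * v / 2)) +
        μ.real {ω | ∃ i < n, ε < X i ω} := by
  set D : ℕ → Ω → ℝ := fun i => centeredTrunc (𝒢 i) μ ε (X i)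
  have hXm (i : ℕ) : Measurable (X i) := ((hX i).mono (𝒢.le _)).measurable
  have hD := measureReal_le_sum_le_exp_of_le 𝒢 (D := D) (by positivity) hv hl
    (fun i => stronglyMeasurable_centeredTrunc (𝒢.mono i.le_succ) (hX i))
    (fun i => memLp_centeredTrunc (hXm i) (hX2 i))
    (fun i => centeredTrunc_le hε (hXm i) (hX2 i) (hX0 i) (hXv i))
    (fun i => condExp_centeredTrunc (𝒢.le i) (hXm i) (hX2 i))
    (fun i => condExp_centeredTrunc_sq_le (𝒢.le i) (hXm i) (hX2 i) (hXv i)) x n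
  have hsub : {ω | x ≤ ∑ i ∈ range n, X i ω} ≤ᵐ[μ]
      ({ω | x ≤ ∑ i ∈ range n, D i ω} ∪ {ω | ∃ i < n, ε < X i ω} : Set Ω) := by
    filter_upwards [ae_all_iff.2 fun i =>
      le_centeredTrunc (m := 𝒢 i) hε (hXm i) (hX2 i) (hX0 i) (hXv i)] with ω hω hx
    by_cases hbad : ∃ i < n, ε < X i ω
    · exact Or.inr hbad
    · push Not at hbad
      exact Or.inl ((show x ≤ _ from hx).trans
        (Finset.sum_le_sum fun i hi => hω i (hbad i (Finset.mem_range.1 hi))))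
  calc μ.real {ω | x ≤ ∑ i ∈ range n, X i ω}
      ≤ μ.real ({ω | x ≤ ∑ i ∈ range n, D i ω} ∪ {ω | ∃ i < n, ε < X i ω}) :=
        ENNReal.toReal_mono (measure_ne_top _ _) (measure_mono_ae hsub)
    _ ≤ _ := (measureReal_union_le _ _).trans (by gcongr)

lemma MeasureTheory.Martingale.condExp_sub_ae_eq_zero_s10 [IsFiniteMeasure μ] {ι : Type*} [Preorder ι]
    {ℱ : Filtration ι m₀} {f : ι → Ω → ℝ} (hf : Martingale f ℱ μ) {i j : ι} (hij : i ≤ j) :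
    μ[f j - f i|ℱ i] =ᵐ[μ] 0 := by
  filter_upwards [condExp_sub (m := ℱ i) (hf.integrable j) (hf.integrable i), hf.condExp_ae_eq hij]
    with ω h1 h2
  rw [h1, Pi.sub_apply, h2,
    condExp_of_stronglyMeasurable (ℱ.le i) (hf.stronglyMeasurable i) (hf.integrable i), sub_self,
    Pi.zero_apply]

section UniformPartition

/-- The index is clamped at `n`, so that `unifPartition s t n i = t` for all `i ≥ n`. -/
noncomputable def unifPartition (s t : ℝ) (n i : ℕ) : ℝ := s + (min i n : ℕ) * ((t - s) / n)

variable {s t : ℝ} {n : ℕ}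

@[simp] lemma unifPartition_zero : unifPartition s t n 0 = s := by simp [unifPartition]

lemma unifPartition_self (hn : n ≠ 0) : unifPartition s t n n = t := by
  have : (n : ℝ) ≠ 0 := Nat.cast_ne_zero.2 hn
  simp only [unifPartition, min_self]
  field_simp
  ring

lemma unifPartition_mono (hst : s ≤ t) : Monotone (unifPartition s t n) := fun i j hij => by
  unfold unifPartition
  gcongr

lemma unifPartition_mem_Icc (hst : s ≤ t) (i : ℕ) : unifPartition s t n i ∈ Icc s t := by
  refine ⟨by simpa using unifPartition_mono hst (Nat.zero_le i), ?_⟩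
  rcases eq_or_ne n 0 with rfl | hn
  · simpa [unifPartition] using hst
  · have : unifPartition s t n i = unifPartition s t n (min i n) := by simp [unifPartition]
    rw [this]
    exact (unifPartition_mono hst (min_le_right i n)).trans_eq (unifPartition_self hn)

lemma unifPartition_succ_sub_le (hst : s ≤ t) (i : ℕ) :
    unifPartition s t n (i + 1) - unifPartition s t n i ≤ (t - s) / n := by
  have h : ((min (i + 1) n : ℕ) : ℝ) ≤ (min i n : ℕ) + 1 := by
    exact_mod_cast (by omega : min (i + 1) n ≤ min i n + 1)
  have : 0 ≤ (t - s) / n := div_nonneg (sub_nonneg.2 hst) n.cast_nonneg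
  simp only [unifPartition]
  nlinarith

lemma eventually_forall_sub_lt_of_continuousOn (hst : s ≤ t) {f : ℝ → ℝ}
    (hf : ContinuousOn f (Icc s t)) {ε : ℝ} (hε : 0 < ε) :
    ∀ᶠ n in atTop, ∀ i, f (unifPartition s t n (i + 1)) - f (unifPartition s t n i) < ε := by
  obtain ⟨δ, hδ, hfδ⟩ := Metric.uniformContinuousOn_iff.1
    (isCompact_Icc.uniformContinuousOn_of_continuous hf) ε hε
  filter_upwards [(tendsto_const_div_atTop_nhds_zero_nat (t - s)).eventually (gt_mem_nhds hδ)]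
    with n hn i
  have hdist : dist (unifPartition s t n (i + 1)) (unifPartition s t n i) < δ := by
    rw [Real.dist_eq, abs_of_nonneg (sub_nonneg.2 (unifPartition_mono hst i.le_succ))]
    exact (unifPartition_succ_sub_le hst i).trans_lt hn
  exact (le_abs_self _).trans_lt
    (hfδ _ (unifPartition_mem_Icc hst _) _ (unifPartition_mem_Icc hst _) hdist)

end UniformPartition

section ContinuousMartingale

variable {M : ℝ → Ω → ℝ} {s t σ ε l : ℝ}

lemma tendsto_measureReal_exists_sub_gt [IsFiniteMeasure μ] (hst : s ≤ t)
    (hMm : ∀ u, Measurable (M u)) (hcont : ∀ ω, ContinuousOn (fun u => M u ω) (Icc s t))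
    (hε : 0 < ε) :
    Tendsto (fun n => μ.real {ω | ∃ i < n,
      ε < M (unifPartition s t n (i + 1)) ω - M (unifPartition s t n i) ω}) atTop (𝓝 0) := by
  have hmeas (n : ℕ) : MeasurableSet {ω | ∃ i < n,
      ε < M (unifPartition s t n (i + 1)) ω - M (unifPartition s t n i) ω} := by
    simp only [Set.ofPred_exists, Set.ofPred_and]
    exact .iUnion fun i => (MeasurableSet.const _).inter
      (measurableSet_lt measurable_const ((hMm _).sub (hMm _)))
  have hlim := tendsto_measure_of_tendsto_indicator_of_isFiniteMeasure (A := ∅) atTop μ hmeas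
    fun ω => by
      filter_upwards [eventually_forall_sub_lt_of_continuousOn hst (hcont ω) hε] with n hn
      simpa using fun i _ => (hn i).le
  simpa [Function.comp_def, measureReal_def] using
    (ENNReal.tendsto_toReal (measure_ne_top μ ∅)).comp hlim

lemma measureReal_sub_ge_le_exp_add [IsProbabilityMeasure μ] {ℱ : Filtration ℝ m₀}
    (hM : Martingale M ℱ μ) (hsq : ∀ u, Integrable (fun ω => M u ω ^ 2) μ)
    (hvar : ∀ u v, s ≤ u → u ≤ v → v ≤ t →
      ∀ᵐ ω ∂μ, μ[fun ω' => (M v ω' - M u ω') ^ 2|ℱ u] ω ≤ σ ^ 2 * (v - u))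
    (hst : s ≤ t) (hε : 0 < ε) (hl : 0 ≤ l) (x : ℝ) {n : ℕ} (hn : n ≠ 0) :
    μ.real {ω | x ≤ M t ω - M s ω} ≤
      exp (-l * x + l ^ 2 * exp (l * (ε + σ ^ 2 * (t - s) / (n * ε))) * (σ ^ 2 * (t - s)) / 2) +
        μ.real {ω | ∃ i < n,
          ε < M (unifPartition s t n (i + 1)) ω - M (unifPartition s t n i) ω} := by
  set p := unifPartition s t n
  have hp_mono : Monotone p := unifPartition_mono hst
  have hp_mem : ∀ i, p i ∈ Icc s t := unifPartition_mem_Icc hst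
  let 𝒢 : Filtration ℕ m₀ :=
    ⟨fun i => ℱ (p i), fun _ _ hij => ℱ.mono (hp_mono hij), fun _ => ℱ.le _⟩
  have hL2 (u : ℝ) : MemLp (M u) 2 μ :=
    (memLp_two_iff_integrable_sq (hM.integrable u).1).2 (hsq u)
  have hv : 0 ≤ σ ^ 2 * ((t - s) / n) :=
    mul_nonneg (sq_nonneg σ) (div_nonneg (sub_nonneg.2 hst) n.cast_nonneg)
  have key := measureReal_le_sum_le_exp_add 𝒢 (X := fun i => M (p (i + 1)) - M (p i)) hv hε hl
    (fun i => (hM.stronglyMeasurable _).sub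
      ((hM.stronglyMeasurable _).mono (ℱ.mono (hp_mono i.le_succ))))
    (fun i => (hL2 _).sub (hL2 _))
    (fun i => hM.condExp_sub_ae_eq_zero_s10 (hp_mono i.le_succ))
    (fun i => by
      filter_upwards [hvar _ _ (hp_mem i).1 (hp_mono i.le_succ) (hp_mem (i + 1)).2] with ω hω
      exact hω.trans (mul_le_mul_of_nonneg_left (unifPartition_succ_sub_le hst i) (sq_nonneg σ)))
    x n
  have htel (ω : Ω) : ∑ i ∈ range n, (M (p (i + 1)) - M (p i)) ω = M t ω - M s ω := by
    simp only [Pi.sub_apply]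
    rw [Finset.sum_range_sub (fun i => M (p i) ω)]
    simp only [p, unifPartition_self hn, unifPartition_zero]
  simp only [htel] at key
  refine key.trans_eq ?_
  congr 3
  field_simp

lemma measureReal_sub_ge_le_exp_mul_exp [IsProbabilityMeasure μ] {ℱ : Filtration ℝ m₀}
    (hM : Martingale M ℱ μ) (hsq : ∀ u, Integrable (fun ω => M u ω ^ 2) μ)
    (hvar : ∀ u v, s ≤ u → u ≤ v → v ≤ t →
      ∀ᵐ ω ∂μ, μ[fun ω' => (M v ω' - M u ω') ^ 2|ℱ u] ω ≤ σ ^ 2 * (v - u))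
    (hcont : ∀ ω, ContinuousOn (fun u => M u ω) (Icc s t))
    (hst : s ≤ t) (hε : 0 < ε) (hl : 0 ≤ l) (x : ℝ) :
    μ.real {ω | x ≤ M t ω - M s ω} ≤
      exp (-l * x + l ^ 2 * exp (l * ε) * (σ ^ 2 * (t - s)) / 2) := by
  set V := σ ^ 2 * (t - s)
  have hmesh : Tendsto (fun n : ℕ => V / (n * ε)) atTop (𝓝 0) := by
    simpa [div_div, mul_comm] using tendsto_const_div_atTop_nhds_zero_nat (V / ε)
  have hexp : Continuous fun c => exp (-l * x + l ^ 2 * exp (l * (ε + c)) * V / 2) := by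
    fun_prop
  have hlim := ((hexp.tendsto 0).comp hmesh).add (tendsto_measureReal_exists_sub_gt (μ := μ) hst
    (fun u => ((hM.stronglyMeasurable u).mono (ℱ.le u)).measurable) hcont hε)
  simp only [add_zero] at hlim
  exact ge_of_tendsto hlim ((eventually_ne_atTop 0).mono fun n hn =>
    measureReal_sub_ge_le_exp_add hM hsq hvar hst hε hl x hn)

lemma measureReal_sub_ge_le_exp [IsProbabilityMeasure μ] {ℱ : Filtration ℝ m₀}
    (hM : Martingale M ℱ μ) (hsq : ∀ u, Integrable (fun ω => M u ω ^ 2) μ)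
    (hvar : ∀ u v, s ≤ u → u ≤ v → v ≤ t →
      ∀ᵐ ω ∂μ, μ[fun ω' => (M v ω' - M u ω') ^ 2|ℱ u] ω ≤ σ ^ 2 * (v - u))
    (hcont : ∀ ω, ContinuousOn (fun u => M u ω) (Icc s t))
    (hst : s ≤ t) (hl : 0 ≤ l) (x : ℝ) :
    μ.real {ω | x ≤ M t ω - M s ω} ≤ exp (-l * x + l ^ 2 * (σ ^ 2 * (t - s)) / 2) := by
  have hexp : Continuous fun ε => exp (-l * x + l ^ 2 * exp (l * ε) * (σ ^ 2 * (t - s)) / 2) := by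
    fun_prop
  have hlim := (hexp.tendsto 0).mono_left (nhdsWithin_le_nhds (s := Ioi 0))
  simp only [mul_zero, exp_zero, mul_one] at hlim
  exact ge_of_tendsto hlim (eventually_mem_nhdsWithin.mono fun ε hε =>
    measureReal_sub_ge_le_exp_mul_exp hM hsq hvar hcont hst hε hl x)

end ContinuousMartingale

end

theorem stmt_10_general {Ω : Type*} {m : MeasurableSpace Ω} {μ : Measure Ω} [IsProbabilityMeasure μ]
    (ℱ : Filtration ℝ m) (M : ℝ → Ω → ℝ) (s T σ : ℝ)
    (hM : Martingale M ℱ μ)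
    (hsq : ∀ t, Integrable (fun ω => (M t ω) ^ 2) μ)
    (hcont : ∀ ω, ContinuousOn (fun t => M t ω) (Set.Icc s T))
    (hvar : ∀ u t : ℝ, s ≤ u → u ≤ t → t ≤ T →
      ∀ᵐ ω ∂μ, (μ[fun ω' => (M t ω' - M u ω') ^ 2 | ℱ u]) ω ≤ σ ^ 2 * (t - u))
    (x : ℝ) (hx : 0 ≤ x) (t : ℝ) (hst : s ≤ t) (htT : t ≤ T) :
    (μ {ω | x ≤ M t ω - M s ω}).toReal ≤ Real.exp (-(x ^ 2) / (2 * σ ^ 2 * (t - s))) := by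
  have hV : 0 ≤ σ ^ 2 * (t - s) := mul_nonneg (sq_nonneg σ) (sub_nonneg.2 hst)
  refine (measureReal_sub_ge_le_exp hM hsq
    (fun u v hsu huv hvt => hvar u v hsu huv (hvt.trans htT))
    (fun ω => (hcont ω).mono (Icc_subset_Icc_right htT)) hst
    (div_nonneg hx hV) x).trans_eq (congrArg exp ?_)
  rw [mul_assoc 2]
  generalize σ ^ 2 * (t - s) = V at hV ⊢
  rcases hV.eq_or_lt with hV0 | hVpos
  · simp [← hV0]
  · field_simp
    ring

theorem stmt_10 {Ω : Type*} {m : MeasurableSpace Ω} {μ : Measure Ω} [IsProbabilityMeasure μ]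
    (ℱ : Filtration ℝ m) (M : ℝ → Ω → ℝ) (s T σ : ℝ) (hsT : s ≤ T) (hσ : 0 < σ)
    (hM : Martingale M ℱ μ)
    (hsq : ∀ t, Integrable (fun ω => (M t ω) ^ 2) μ)
    (hcont : ∀ ω, ContinuousOn (fun t => M t ω) (Set.Icc s T))
    (hvar : ∀ u t : ℝ, s ≤ u → u ≤ t → t ≤ T →
      ∀ᵐ ω ∂μ, (μ[fun ω' => (M t ω' - M u ω') ^ 2 | ℱ u]) ω ≤ σ ^ 2 * (t - u))
    (x : ℝ) (hx : 0 ≤ x) (t : ℝ) (hst : s ≤ t) (htT : t ≤ T) :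
    (μ {ω | x ≤ M t ω - M s ω}).toReal ≤ Real.exp (-(x ^ 2) / (2 * σ ^ 2 * (t - s))) :=
  stmt_10_general ℱ M s T σ hM hsq hcont hvar x hx t hst htT
end
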